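/- Let D ≥ 3 and let H be a connected graph with maximum degree at most D+1. Then m₂(H) ≤ D. -/

import Mathlib

open scoped Classical

/-- The 2-density `d₂` as a function of the number of vertices `v` and edges `e`. -/
noncomputable def d2val (v e : ℕ) : ℚ :=
  if 1 ≤ e ∧ 3 ≤ v then ((e : ℚ) - 1) / ((v : ℚ) - 2) else 1 / 2

/-- `m₂(H) ≤ x`: every subgraph of `H` has 2-density at most `x`. -/
def m2LE {V : Type*} (H : SimpleGraph V) (x : ℚ) : Prop :=
  ∀ (s : Finset V) (H' : SimpleGraph V), H' ≤ H →
    (∀ ⦃a b⦄, H'.Adj a b → a ∈ s ∧ b ∈ s) →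
    d2val s.card H'.edgeSet.ncard ≤ x

/-!
In a subgraph with `v` vertices and `e` edges every degree is at most `min (D + 1) (v - 1)`, so
the handshake lemma gives `2e ≤ v · min (D + 1) (v - 1)`. For `v ≤ 4` the clique bound
`2e ≤ v (v - 1)` already yields `e - 1 ≤ D (v - 2)`; for `v ≥ 5` the degree bound
`2e ≤ v (D + 1)` does, because `D ≥ 3`.
-/

open Finset

namespace SimpleGraph

variable {V : Type*} [Fintype V] {G : SimpleGraph V} {s : Finset V}

lemma degree_le_card_sub_one (hs : ∀ ⦃a b⦄, G.Adj a b → a ∈ s ∧ b ∈ s) {a : V} (ha : a ∈ s) :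
    G.degree a ≤ #s - 1 := by
  rw [← card_neighborFinset_eq_degree, ← card_erase_of_mem ha]
  refine card_le_card fun b hb => ?_
  rw [mem_neighborFinset] at hb
  exact mem_erase.mpr ⟨hb.ne.symm, (hs hb).2⟩

lemma two_mul_card_edgeFinset_le (hs : ∀ ⦃a b⦄, G.Adj a b → a ∈ s ∧ b ∈ s) {k : ℕ}
    (hk : ∀ a ∈ s, G.degree a ≤ k) : 2 * #G.edgeFinset ≤ #s * k := by
  have hisolated : ∀ a ∉ s, G.degree a = 0 := fun a ha =>
    (G.degree_eq_zero_iff_notMem_support a).mpr fun ⟨_, hab⟩ => ha (hs hab).1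
  calc 2 * #G.edgeFinset = ∑ a, G.degree a := (sum_degrees_eq_twice_card_edges G).symm
    _ = ∑ a ∈ s, G.degree a :=
      (sum_subset (subset_univ s) fun a _ ha => hisolated a ha).symm
    _ ≤ #s * k := by simpa using sum_le_card_nsmul s _ k hk

end SimpleGraph

lemma d2val_le_of_two_mul_le {D v e : ℕ} (hD : 3 ≤ D) (h : 2 * e ≤ v * min (D + 1) (v - 1)) :
    d2val v e ≤ D := by
  have hD' : (3 : ℚ) ≤ D := by exact_mod_cast hD
  unfold d2val
  split_ifs with hve
  · obtain ⟨-, hv⟩ := hve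
    have hdeg : 2 * e ≤ v * (D + 1) := h.trans (Nat.mul_le_mul_left v (min_le_left _ _))
    have hclique : 2 * e ≤ v * (v - 1) := h.trans (Nat.mul_le_mul_left v (min_le_right _ _))
    have key : e + 2 * D ≤ D * v + 1 := by
      rcases le_or_gt v 4 with hv4 | hv5
      · interval_cases v <;> omega
      · nlinarith
    have hv' : (3 : ℚ) ≤ v := by exact_mod_cast hv
    rw [div_le_iff₀ (by linarith)]
    have key' : (e : ℚ) + 2 * D ≤ D * v + 1 := by exact_mod_cast key
    linarith
  · linarith

theorem m2_maxdeg_Dplusone_general {V : Type*} [Fintype V] (D : ℕ) (hD : 3 ≤ D)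
    (H : SimpleGraph V)
    (hdeg : ∀ v, (H.neighborSet v).ncard ≤ D + 1) :
    m2LE H D := by
  intro s H' hle hs
  have hdeg' : ∀ a ∈ s, H'.degree a ≤ min (D + 1) (#s - 1) := fun a ha => by
    refine le_min ((SimpleGraph.degree_le_of_le hle).trans ?_)
      (SimpleGraph.degree_le_card_sub_one hs ha)
    rw [← SimpleGraph.card_neighborSet_eq_degree, Set.fintypeCard_eq_ncard]
    exact hdeg a
  rw [← SimpleGraph.coe_edgeFinset, Set.ncard_coe_finset]
  exact d2val_le_of_two_mul_le hD (SimpleGraph.two_mul_card_edgeFinset_le hs hdeg')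

/-- For `D ≥ 3`, a connected graph `H` with maximum degree at most `D+1` satisfies
`m₂(H) ≤ D`. -/
theorem m2_maxdeg_Dplusone {V : Type*} [Fintype V] (D : ℕ) (hD : 3 ≤ D)
    (H : SimpleGraph V) (hconn : H.Connected)
    (hdeg : ∀ v, (H.neighborSet v).ncard ≤ D + 1) :
    m2LE H D :=
  m2_maxdeg_Dplusone_general D hD H hdeg
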